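/- Let ℓ, ε, n be positive integers and let A be an ℓ×ℓ matrix over F = ℝ or ℂ. Let ω₁ be the smallest singular value (the 2ℓεn-th largest singular value) of the 2ℓεn × (2ε+1)ℓn block matrix [[Aᵀ⊗I_{εn}, I_ℓ⊗E_ε⊗I_n],[I_ℓ⊗I_{εn}, I_ℓ⊗F_ε⊗I_n]]. Then ω₁ ≥ 1/(1 + 2ε·max(1, ‖A‖₂^ε)). -/

import Mathlib

open Matrix
open scoped Kronecker

noncomputable section

/-- The `k × (k+1)` matrix `E_k = [I_k 0]`. -/
def Ek (𝕜 : Type*) [RCLike 𝕜] (k : ℕ) : Matrix (Fin k) (Fin (k+1)) 𝕜 :=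
  Matrix.of fun i j => if (j : ℕ) = (i : ℕ) then 1 else 0

/-- The `k × (k+1)` matrix `F_k = [0 I_k]`. -/
def Fk (𝕜 : Type*) [RCLike 𝕜] (k : ℕ) : Matrix (Fin k) (Fin (k+1)) 𝕜 :=
  Matrix.of fun i j => if (j : ℕ) = (i : ℕ) + 1 then 1 else 0

/-- The standard unit vector `(0, …, 0, 1)ᵀ` of size `k+1`. -/
def evec (𝕜 : Type*) [RCLike 𝕜] (k : ℕ) : Fin (k+1) → 𝕜 :=
  fun i => if (i : ℕ) = k then 1 else 0

variable {𝕜 : Type*} [RCLike 𝕜]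

/-- Frobenius norm of a matrix. -/
def frobNorm {p q : Type*} [Fintype p] [Fintype q] (M : Matrix p q 𝕜) : ℝ :=
  Real.sqrt (∑ i, ∑ j, ‖M i j‖ ^ 2)

/-- Spectral norm (largest singular value) of a matrix. -/
def specNorm {p q : Type*} [Fintype p] [Fintype q] [DecidableEq p] (M : Matrix p q 𝕜) : ℝ :=
  Real.sqrt (⨆ i, (Matrix.isHermitian_mul_conjTranspose_self M).eigenvalues i)

/-- Smallest singular value of a `p × q` matrix with `p ≤ q`
(the `p`-th largest singular value). -/
def sigmaMin {p q : Type*} [Fintype p] [Fintype q] [DecidableEq p] (M : Matrix p q 𝕜) : ℝ :=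
  Real.sqrt (⨅ i, (Matrix.isHermitian_mul_conjTranspose_self M).eigenvalues i)

/-- Euclidean norm of a vector. -/
def vecNorm {q : Type*} [Fintype q] (x : q → 𝕜) : ℝ :=
  Real.sqrt (∑ i, ‖x i‖ ^ 2)

/-- Frobenius norm of the pencil `P.1 - λ • P.2`. -/
def pFrob {p q : Type*} [Fintype p] [Fintype q] (P : Matrix p q 𝕜 × Matrix p q 𝕜) : ℝ :=
  Real.sqrt (frobNorm P.1 ^ 2 + frobNorm P.2 ^ 2)

/-- Spectral norm of the pencil `P.1 - λ • P.2`. -/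
def pSpec {p q : Type*} [Fintype p] [Fintype q] [DecidableEq p]
    (P : Matrix p q 𝕜 × Matrix p q 𝕜) : ℝ :=
  Real.sqrt (specNorm P.1 ^ 2 + specNorm P.2 ^ 2)

/-- A 3×3 block matrix. -/
def blocks3 {R1 R2 R3 C1 C2 C3 : Type*}
    (M11 : Matrix R1 C1 𝕜) (M12 : Matrix R1 C2 𝕜) (M13 : Matrix R1 C3 𝕜)
    (M21 : Matrix R2 C1 𝕜) (M22 : Matrix R2 C2 𝕜) (M23 : Matrix R2 C3 𝕜)
    (M31 : Matrix R3 C1 𝕜) (M32 : Matrix R3 C2 𝕜) (M33 : Matrix R3 C3 𝕜) :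
    Matrix (R1 ⊕ (R2 ⊕ R3)) (C1 ⊕ (C2 ⊕ C3)) 𝕜 :=
  Matrix.fromBlocks M11 (Matrix.fromCols M12 M13) (Matrix.fromRows M21 M31)
    (Matrix.fromBlocks M22 M23 M32 M33)

/-- `K̂₂ᵀ C = (e_{η+1} ⊗ I_m) C`. -/
def colUnit {m ℓ : ℕ} (η : ℕ) (C : Matrix (Fin m) (Fin ℓ) 𝕜) :
    Matrix (Fin (η+1) × Fin m) (Fin ℓ) 𝕜 :=
  Matrix.of fun i j => evec 𝕜 η i.1 * C i.2 j

/-- `B K̂₁ = B (e_{ε+1}ᵀ ⊗ I_n)`. -/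
def rowUnit {n ℓ : ℕ} (ε : ℕ) (B : Matrix (Fin ℓ) (Fin n) 𝕜) :
    Matrix (Fin ℓ) (Fin (ε+1) × Fin n) 𝕜 :=
  Matrix.of fun i j => evec 𝕜 ε j.1 * B i j.2

/-- Row index type of a block Kronecker pencil. -/
abbrev SRow (m ℓ ε η n : ℕ) := (Fin (η+1) × Fin m) ⊕ (Fin ℓ ⊕ (Fin ε × Fin n))

/-- Column index type of a block Kronecker pencil. -/
abbrev SCol (m ℓ ε η n : ℕ) := (Fin (ε+1) × Fin n) ⊕ (Fin ℓ ⊕ (Fin η × Fin m))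

/-- The block Kronecker pencil
`S(λ) = [[M(λ), K̂₂ᵀC, K₂ᵀ(λ)], [BK̂₁, A-λI, 0], [K₁(λ), 0, 0]]`
represented as a pair `(Sa, Sb)` with `S(λ) = Sa - λ Sb`. -/
def blockKron (m n ℓ ε η : ℕ) (A : Matrix (Fin ℓ) (Fin ℓ) 𝕜) (B : Matrix (Fin ℓ) (Fin n) 𝕜)
    (C : Matrix (Fin m) (Fin ℓ) 𝕜)
    (M : Matrix (Fin (η+1) × Fin m) (Fin (ε+1) × Fin n) 𝕜 ×
         Matrix (Fin (η+1) × Fin m) (Fin (ε+1) × Fin n) 𝕜) :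
    Matrix (SRow m ℓ ε η n) (SCol m ℓ ε η n) 𝕜 × Matrix (SRow m ℓ ε η n) (SCol m ℓ ε η n) 𝕜 :=
  (blocks3 M.1 (colUnit η C) ((Ek 𝕜 η)ᵀ ⊗ₖ (1 : Matrix (Fin m) (Fin m) 𝕜))
      (rowUnit ε B) A 0
      (Ek 𝕜 ε ⊗ₖ (1 : Matrix (Fin n) (Fin n) 𝕜)) 0 0,
   blocks3 M.2 0 ((Fk 𝕜 η)ᵀ ⊗ₖ (1 : Matrix (Fin m) (Fin m) 𝕜))
      0 1 0
      (Fk 𝕜 ε ⊗ₖ (1 : Matrix (Fin n) (Fin n) 𝕜)) 0 0)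

/-- Row index type of the matrix `T`. -/
abbrev TRow (m ℓ ε η n : ℕ) :=
  (((Fin η × Fin m) × Fin ℓ) ⊕ ((Fin η × Fin m) × Fin ℓ)) ⊕
  (((Fin ℓ × (Fin ε × Fin n)) ⊕ (Fin ℓ × (Fin ε × Fin n))) ⊕
   (((Fin η × Fin m) × (Fin ε × Fin n)) ⊕ ((Fin η × Fin m) × (Fin ε × Fin n))))

/-- Column index type of the matrix `T`. -/
abbrev TCol (m ℓ ε η n : ℕ) :=
  (((Fin (η+1) × Fin m) × Fin ℓ) ⊕ ((Fin η × Fin m) × Fin ℓ)) ⊕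
  (((Fin ℓ × (Fin ε × Fin n)) ⊕ (Fin ℓ × (Fin (ε+1) × Fin n))) ⊕
   (((Fin (η+1) × Fin m) × (Fin ε × Fin n)) ⊕ ((Fin η × Fin m) × (Fin (ε+1) × Fin n))))

/-- The 6×6 block matrix `T`. -/
def Tmat (m n ℓ ε η : ℕ) (A : Matrix (Fin ℓ) (Fin ℓ) 𝕜) (B : Matrix (Fin ℓ) (Fin n) 𝕜)
    (C : Matrix (Fin m) (Fin ℓ) 𝕜) : Matrix (TRow m ℓ ε η n) (TCol m ℓ ε η n) 𝕜 :=
  Matrix.fromRows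
    (Matrix.fromCols
      (Matrix.fromBlocks
        ((Ek 𝕜 η ⊗ₖ (1 : Matrix (Fin m) (Fin m) 𝕜)) ⊗ₖ (1 : Matrix (Fin ℓ) (Fin ℓ) 𝕜))
        ((1 : Matrix (Fin η × Fin m) (Fin η × Fin m) 𝕜) ⊗ₖ A)
        ((Fk 𝕜 η ⊗ₖ (1 : Matrix (Fin m) (Fin m) 𝕜)) ⊗ₖ (1 : Matrix (Fin ℓ) (Fin ℓ) 𝕜))
        ((1 : Matrix (Fin η × Fin m) (Fin η × Fin m) 𝕜) ⊗ₖ (1 : Matrix (Fin ℓ) (Fin ℓ) 𝕜)))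
      (Matrix.fromCols 0
        (Matrix.fromBlocks 0
          ((1 : Matrix (Fin η × Fin m) (Fin η × Fin m) 𝕜) ⊗ₖ (rowUnit ε B))
          0 0)))
    (Matrix.fromRows
      (Matrix.fromCols 0
        (Matrix.fromCols
          (Matrix.fromBlocks
            (Aᵀ ⊗ₖ (1 : Matrix (Fin ε × Fin n) (Fin ε × Fin n) 𝕜))
            ((1 : Matrix (Fin ℓ) (Fin ℓ) 𝕜) ⊗ₖ (Ek 𝕜 ε ⊗ₖ (1 : Matrix (Fin n) (Fin n) 𝕜)))
            ((1 : Matrix (Fin ℓ) (Fin ℓ) 𝕜) ⊗ₖ (1 : Matrix (Fin ε × Fin n) (Fin ε × Fin n) 𝕜))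
            ((1 : Matrix (Fin ℓ) (Fin ℓ) 𝕜) ⊗ₖ (Fk 𝕜 ε ⊗ₖ (1 : Matrix (Fin n) (Fin n) 𝕜))))
          (Matrix.fromBlocks
            (Matrix.of fun (i : Fin ℓ × (Fin ε × Fin n))
                (j : (Fin (η+1) × Fin m) × (Fin ε × Fin n)) =>
              evec 𝕜 η j.1.1 * C j.1.2 i.1 * (if i.2 = j.2 then 1 else 0))
            0 0 0)))
      (Matrix.fromCols 0
        (Matrix.fromCols 0
          (Matrix.fromBlocks
            ((Ek 𝕜 η ⊗ₖ (1 : Matrix (Fin m) (Fin m) 𝕜)) ⊗ₖ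
              (1 : Matrix (Fin ε × Fin n) (Fin ε × Fin n) 𝕜))
            ((1 : Matrix (Fin η × Fin m) (Fin η × Fin m) 𝕜) ⊗ₖ
              (Ek 𝕜 ε ⊗ₖ (1 : Matrix (Fin n) (Fin n) 𝕜)))
            ((Fk 𝕜 η ⊗ₖ (1 : Matrix (Fin m) (Fin m) 𝕜)) ⊗ₖ
              (1 : Matrix (Fin ε × Fin n) (Fin ε × Fin n) 𝕜))
            ((1 : Matrix (Fin η × Fin m) (Fin η × Fin m) 𝕜) ⊗ₖ
              (Fk 𝕜 ε ⊗ₖ (1 : Matrix (Fin n) (Fin n) 𝕜)))))))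

/-- The 6×6 block matrix `ΔT` built from the blocks of the perturbation pencil. -/
def DeltaT (m n ℓ ε η : ℕ)
    (Δ12a Δ12b : Matrix (Fin (η+1) × Fin m) (Fin ℓ) 𝕜)
    (Δ13a Δ13b : Matrix (Fin (η+1) × Fin m) (Fin η × Fin m) 𝕜)
    (Δ21a Δ21b : Matrix (Fin ℓ) (Fin (ε+1) × Fin n) 𝕜)
    (Δ22a Δ22b : Matrix (Fin ℓ) (Fin ℓ) 𝕜)
    (Δ23a Δ23b : Matrix (Fin ℓ) (Fin η × Fin m) 𝕜)
    (Δ31a Δ31b : Matrix (Fin ε × Fin n) (Fin (ε+1) × Fin n) 𝕜)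
    (Δ32a Δ32b : Matrix (Fin ε × Fin n) (Fin ℓ) 𝕜) :
    Matrix (TRow m ℓ ε η n) (TCol m ℓ ε η n) 𝕜 :=
  Matrix.fromRows
    (Matrix.fromCols
      (Matrix.fromBlocks
        (Δ13aᵀ ⊗ₖ (1 : Matrix (Fin ℓ) (Fin ℓ) 𝕜))
        ((1 : Matrix (Fin η × Fin m) (Fin η × Fin m) 𝕜) ⊗ₖ Δ22a)
        (Δ13bᵀ ⊗ₖ (1 : Matrix (Fin ℓ) (Fin ℓ) 𝕜))
        ((1 : Matrix (Fin η × Fin m) (Fin η × Fin m) 𝕜) ⊗ₖ Δ22b))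
      (Matrix.fromCols 0
        (Matrix.fromBlocks 0 ((1 : Matrix (Fin η × Fin m) (Fin η × Fin m) 𝕜) ⊗ₖ Δ21a)
          0 ((1 : Matrix (Fin η × Fin m) (Fin η × Fin m) 𝕜) ⊗ₖ Δ21b))))
    (Matrix.fromRows
      (Matrix.fromCols 0
        (Matrix.fromCols
          (Matrix.fromBlocks
            (Δ22aᵀ ⊗ₖ (1 : Matrix (Fin ε × Fin n) (Fin ε × Fin n) 𝕜))
            ((1 : Matrix (Fin ℓ) (Fin ℓ) 𝕜) ⊗ₖ Δ31a)
            (Δ22bᵀ ⊗ₖ (1 : Matrix (Fin ε × Fin n) (Fin ε × Fin n) 𝕜))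
            ((1 : Matrix (Fin ℓ) (Fin ℓ) 𝕜) ⊗ₖ Δ31b))
          (Matrix.fromBlocks
            (Δ12aᵀ ⊗ₖ (1 : Matrix (Fin ε × Fin n) (Fin ε × Fin n) 𝕜)) 0
            (Δ12bᵀ ⊗ₖ (1 : Matrix (Fin ε × Fin n) (Fin ε × Fin n) 𝕜)) 0)))
      (Matrix.fromCols
        (Matrix.fromBlocks 0 ((1 : Matrix (Fin η × Fin m) (Fin η × Fin m) 𝕜) ⊗ₖ Δ32a)
          0 ((1 : Matrix (Fin η × Fin m) (Fin η × Fin m) 𝕜) ⊗ₖ Δ32b))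
        (Matrix.fromCols
          (Matrix.fromBlocks
            (Δ23aᵀ ⊗ₖ (1 : Matrix (Fin ε × Fin n) (Fin ε × Fin n) 𝕜)) 0
            (Δ23bᵀ ⊗ₖ (1 : Matrix (Fin ε × Fin n) (Fin ε × Fin n) 𝕜)) 0)
          (Matrix.fromBlocks
            (Δ13aᵀ ⊗ₖ (1 : Matrix (Fin ε × Fin n) (Fin ε × Fin n) 𝕜))
            ((1 : Matrix (Fin η × Fin m) (Fin η × Fin m) 𝕜) ⊗ₖ Δ31a)
            (Δ13bᵀ ⊗ₖ (1 : Matrix (Fin ε × Fin n) (Fin ε × Fin n) 𝕜))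
            ((1 : Matrix (Fin η × Fin m) (Fin η × Fin m) 𝕜) ⊗ₖ Δ31b)))))

/-- `(Λ_k(x) ⊗ I_m)` where `Λ_k(x) = (x^k, …, x, 1)ᵀ`. -/
def LamI (𝕜 : Type*) [RCLike 𝕜] (k m : ℕ) (x : 𝕜) :
    Matrix (Fin (k+1) × Fin m) (Fin m) 𝕜 :=
  Matrix.of fun i j => if i.2 = j then x ^ (k - (i.1 : ℕ)) else 0

/-- `(A, B)` is controllable if the controllability matrix `[B, AB, …, A^{ℓ-1}B]`
has full rank `ℓ`. -/
def Controllable {ℓ n : ℕ} (A : Matrix (Fin ℓ) (Fin ℓ) 𝕜)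
    (B : Matrix (Fin ℓ) (Fin n) 𝕜) : Prop :=
  (Matrix.of fun (i : Fin ℓ) (p : Fin ℓ × Fin n) => (A ^ (p.1 : ℕ) * B) i p.2).rank = ℓ

/-- `(A, C)` is observable if `(Aᵀ, Cᵀ)` is controllable. -/
def Observable {ℓ m : ℕ} (A : Matrix (Fin ℓ) (Fin ℓ) 𝕜)
    (C : Matrix (Fin m) (Fin ℓ) 𝕜) : Prop :=
  Controllable Aᵀ Cᵀ

end

/-!
The matrix `M = [[M₁₁, M₁₂], [I, M₂₂]]` has an explicit right inverse
`W = [[0, I], [0, 0]] + [-M₂₂; I] H [I, -M₁₁]`, where `H` is a right inverse of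
`M₁₂ - M₁₁ M₂₂ = I ⊗ E_ε ⊗ I - Aᵀ ⊗ F_ε ⊗ I`. Multiplying on the right by `I ⊗ E_εᴴ ⊗ I` turns
this matrix into `1 - T` with `T = Aᵀ ⊗ F_ε E_εᴴ ⊗ I`, and `F_ε E_εᴴ` is the nilpotent shift, so
`H = (I ⊗ E_εᴴ ⊗ I) ∑_{d<ε} T^d` is a finite Neumann series with `‖H‖₂ ≤ ∑_{d<ε} ‖A‖₂^d`.
A unit eigenvector `v` of `M Mᴴ` satisfies `v = Wᴴ Mᴴ v`, so every eigenvalue `‖Mᴴ v‖²` of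
`M Mᴴ` is at least `1 / ‖W‖₂²`, and `‖W‖₂ ≤ 1 + √2 ‖H‖₂ √(1 + ‖A‖₂²) ≤ 1 + 2ε max(1, ‖A‖₂^ε)`.
-/

open scoped Matrix.Norms.L2Operator

section Shift

variable {𝕜 : Type*} [RCLike 𝕜]

lemma Ek_apply {k : ℕ} (i : Fin k) (j : Fin (k + 1)) :
    Ek 𝕜 k i j = if j = i.castSucc then 1 else 0 := by
  simp [Ek, Fin.ext_iff]

lemma Fk_apply {k : ℕ} (i : Fin k) (j : Fin (k + 1)) :
    Fk 𝕜 k i j = if j = i.succ then 1 else 0 := by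
  simp [Fk, Fin.ext_iff]

lemma Ek_mul_conjTranspose_Ek (k : ℕ) : Ek 𝕜 k * (Ek 𝕜 k)ᴴ = 1 := by
  ext i j
  simp [mul_apply, Ek_apply, one_apply, apply_ite star, eq_comm]

lemma Fk_mul_conjTranspose_Fk (k : ℕ) : Fk 𝕜 k * (Fk 𝕜 k)ᴴ = 1 := by
  ext i j
  simp [mul_apply, Fk_apply, one_apply, apply_ite star, eq_comm]

lemma Fk_mul_conjTranspose_Ek_apply (k : ℕ) (i j : Fin k) :
    (Fk 𝕜 k * (Ek 𝕜 k)ᴴ) i j = if (i : ℕ) + 1 = j then 1 else 0 := by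
  simp only [mul_apply, Fk_apply, Ek_apply, conjTranspose_apply, apply_ite star, star_one,
    star_zero, ite_mul, one_mul, zero_mul, Finset.sum_ite_eq', Finset.mem_univ, if_true]
  simp [Fin.ext_iff, eq_comm]

lemma Fk_mul_conjTranspose_Ek_pow_apply (k d : ℕ) (i j : Fin k) :
    ((Fk 𝕜 k * (Ek 𝕜 k)ᴴ) ^ d) i j = if (i : ℕ) + d = j then 1 else 0 := by
  induction d generalizing j with
  | zero => simp [one_apply, Fin.ext_iff]
  | succ d ih =>
    rw [pow_succ, mul_apply]
    simp only [ih, Fk_mul_conjTranspose_Ek_apply, ite_mul, one_mul, zero_mul]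
    by_cases h : (i : ℕ) + d < k
    · rw [Finset.sum_eq_single ⟨(i : ℕ) + d, h⟩]
      · simp only [if_true, add_assoc]
      · intro x _ hx
        rw [if_neg fun hx' => hx (Fin.ext hx'.symm)]
      · simp
    · rw [Finset.sum_eq_zero fun x _ => if_neg (by omega), if_neg (by omega)]

lemma Fk_mul_conjTranspose_Ek_pow_self (k : ℕ) : (Fk 𝕜 k * (Ek 𝕜 k)ᴴ) ^ k = 0 := by
  ext i j
  rw [Fk_mul_conjTranspose_Ek_pow_apply, if_neg (by omega), Matrix.zero_apply]

end Shift

namespace Matrix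

lemma kronecker_pow {R m n : Type*} [CommSemiring R] [Fintype m] [Fintype n] [DecidableEq m]
    [DecidableEq n] (X : Matrix m m R) (Y : Matrix n n R) (d : ℕ) :
    (X ⊗ₖ Y) ^ d = (X ^ d) ⊗ₖ (Y ^ d) := by
  induction d with
  | zero => simp
  | succ d ih => rw [pow_succ, pow_succ, pow_succ, ih, mul_kronecker_mul]

section BlockRightInverse

variable {R m n : Type*} [Ring R] [Fintype m] [Fintype n] [DecidableEq m] [DecidableEq n]

def blockRightInverse (P : Matrix m m R) (S : Matrix m n R) (H : Matrix n m R) :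
    Matrix (m ⊕ n) (m ⊕ m) R :=
  fromBlocks 0 1 0 0 + fromRows (-S) 1 * H * fromCols 1 (-P)

lemma fromBlocks_mul_blockRightInverse {P : Matrix m m R} {Q S : Matrix m n R}
    {H : Matrix n m R} (hH : (Q - P * S) * H = 1) :
    fromBlocks P Q 1 S * blockRightInverse P S H = 1 := by
  rw [blockRightInverse, fromRows_mul, fromRows_mul_fromCols, fromBlocks_add,
    fromBlocks_multiply, ← fromBlocks_one, fromBlocks_inj]
  have hHP : (Q - P * S) * H * P = P := by rw [hH, Matrix.one_mul]
  simp only [Matrix.sub_mul, Matrix.mul_assoc] at hH hHP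
  simp only [Matrix.mul_neg, Matrix.neg_mul, Matrix.mul_one, Matrix.one_mul, Matrix.mul_add,
    Matrix.mul_assoc, zero_add]
  refine ⟨?_, ?_, neg_add_cancel _, ?_⟩
  · rw [← hH]; abel
  · rw [← neg_eq_zero, ← sub_eq_zero.mpr hHP]; abel
  · abel

end BlockRightInverse

section ShiftRightInverse

variable {𝕜 ι ν : Type*} [RCLike 𝕜] [Fintype ι] [Fintype ν] [DecidableEq ι] [DecidableEq ν]

def shiftRightInverse (k : ℕ) (B : Matrix ι ι 𝕜) :
    Matrix (ι × (Fin (k + 1) × ν)) (ι × (Fin k × ν)) 𝕜 :=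
  ((1 : Matrix ι ι 𝕜) ⊗ₖ ((Ek 𝕜 k)ᴴ ⊗ₖ (1 : Matrix ν ν 𝕜))) *
    ∑ d ∈ Finset.range k, (B ⊗ₖ ((Fk 𝕜 k * (Ek 𝕜 k)ᴴ) ⊗ₖ (1 : Matrix ν ν 𝕜))) ^ d

lemma mul_shiftRightInverse (k : ℕ) (B : Matrix ι ι 𝕜) :
    ((1 : Matrix ι ι 𝕜) ⊗ₖ (Ek 𝕜 k ⊗ₖ (1 : Matrix ν ν 𝕜))
      - B ⊗ₖ (1 : Matrix (Fin k × ν) (Fin k × ν) 𝕜)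
        * ((1 : Matrix ι ι 𝕜) ⊗ₖ (Fk 𝕜 k ⊗ₖ (1 : Matrix ν ν 𝕜))))
      * (shiftRightInverse k B : Matrix (ι × (Fin (k + 1) × ν)) (ι × (Fin k × ν)) 𝕜) = 1 := by
  set T := B ⊗ₖ ((Fk 𝕜 k * (Ek 𝕜 k)ᴴ) ⊗ₖ (1 : Matrix ν ν 𝕜))
  have hone : (1 : Matrix (Fin k × ν) (Fin k × ν) 𝕜) = 1 ⊗ₖ (1 : Matrix ν ν 𝕜) :=
    one_kronecker_one.symm
  have hG : ((1 : Matrix ι ι 𝕜) ⊗ₖ (Ek 𝕜 k ⊗ₖ (1 : Matrix ν ν 𝕜))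
      - B ⊗ₖ (1 : Matrix (Fin k × ν) (Fin k × ν) 𝕜)
        * ((1 : Matrix ι ι 𝕜) ⊗ₖ (Fk 𝕜 k ⊗ₖ (1 : Matrix ν ν 𝕜))))
      * ((1 : Matrix ι ι 𝕜) ⊗ₖ ((Ek 𝕜 k)ᴴ ⊗ₖ (1 : Matrix ν ν 𝕜))) = 1 - T := by
    rw [hone, Matrix.sub_mul, ← mul_kronecker_mul, ← mul_kronecker_mul, ← mul_kronecker_mul,
      ← mul_kronecker_mul, ← mul_kronecker_mul, ← mul_kronecker_mul, Ek_mul_conjTranspose_Ek]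
    simp only [Matrix.one_mul, Matrix.mul_one, one_kronecker_one, T]
  have hT : T ^ k = 0 := by
    rw [kronecker_pow, kronecker_pow, Fk_mul_conjTranspose_Ek_pow_self, zero_kronecker,
      kronecker_zero]
  rw [shiftRightInverse, ← Matrix.mul_assoc, hG, mul_neg_geom_sum, hT, sub_zero]

end ShiftRightInverse

section L2OpNorm

variable {𝕜 : Type*} [RCLike 𝕜]

lemma kronecker_one_mulVec {l m n : Type*} [Fintype l] [Fintype n] [DecidableEq l]
    (X : Matrix m n 𝕜) (v : n × l → 𝕜) (i : m) (k : l) :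
    (X ⊗ₖ (1 : Matrix l l 𝕜) *ᵥ v) (i, k) = (X *ᵥ fun j => v (j, k)) i := by
  simp [mulVec, dotProduct, Fintype.sum_prod_type, one_apply]

lemma one_kronecker_mulVec {l m n : Type*} [Fintype l] [Fintype n] [DecidableEq l]
    (Y : Matrix m n 𝕜) (v : l × n → 𝕜) (k : l) (i : m) :
    ((1 : Matrix l l 𝕜) ⊗ₖ Y *ᵥ v) (k, i) = (Y *ᵥ fun j => v (k, j)) i := by
  simp [mulVec, dotProduct, Fintype.sum_prod_type, one_apply]

lemma re_star_dotProduct_self {ι : Type*} [Fintype ι] (w : ι → 𝕜) :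
    RCLike.re (star w ⬝ᵥ w) = ∑ j, ‖w j‖ ^ 2 := by
  have h : star w ⬝ᵥ w = ∑ j, ((‖w j‖ ^ 2 : ℝ) : 𝕜) := by
    simp [dotProduct, RCLike.star_def, RCLike.conj_mul]
  rw [h, map_sum]
  simp only [RCLike.ofReal_re]

variable {l m n : Type*} [Fintype l] [Fintype m] [Fintype n]

lemma sum_norm_sq_mulVec_le [DecidableEq n] (M : Matrix m n 𝕜) (v : n → 𝕜) :
    ∑ i, ‖(M *ᵥ v) i‖ ^ 2 ≤ ‖M‖ ^ 2 * ∑ j, ‖v j‖ ^ 2 := by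
  have h := pow_le_pow_left₀ (norm_nonneg _) (M.l2_opNorm_mulVec (WithLp.toLp 2 v)) 2
  rwa [mul_pow, EuclideanSpace.norm_sq_eq, EuclideanSpace.norm_sq_eq] at h

lemma l2_opNorm_le_of_sum_norm_sq_le [DecidableEq n] {M : Matrix m n 𝕜} {c : ℝ} (hc : 0 ≤ c)
    (h : ∀ v : n → 𝕜, ∑ i, ‖(M *ᵥ v) i‖ ^ 2 ≤ c ^ 2 * ∑ j, ‖v j‖ ^ 2) : ‖M‖ ≤ c := by
  rw [l2_opNorm_def]
  refine ContinuousLinearMap.opNorm_le_bound _ hc fun x => ?_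
  refine (sq_le_sq₀ (norm_nonneg _) (by positivity)).mp ?_
  rw [mul_pow, EuclideanSpace.norm_sq_eq, EuclideanSpace.norm_sq_eq]
  exact h x

lemma l2_opNorm_one_le [DecidableEq n] : ‖(1 : Matrix n n 𝕜)‖ ≤ 1 :=
  l2_opNorm_le_of_sum_norm_sq_le zero_le_one fun v => by simp

lemma l2_opNorm_pow_le [DecidableEq n] (M : Matrix n n 𝕜) (d : ℕ) : ‖M ^ d‖ ≤ ‖M‖ ^ d := by
  induction d with
  | zero => simpa using l2_opNorm_one_le
  | succ d ih =>
    rw [pow_succ, pow_succ]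
    exact (l2_opNorm_mul _ _).trans (mul_le_mul_of_nonneg_right ih (norm_nonneg _))

lemma l2_opNorm_map_star_le [DecidableEq n] (M : Matrix m n 𝕜) : ‖M.map star‖ ≤ ‖M‖ :=
  l2_opNorm_le_of_sum_norm_sq_le (norm_nonneg _) fun v => by
    have hv : (M.map star) *ᵥ v = star (M *ᵥ star v) := by
      ext i; simp [mulVec, dotProduct, mul_comm]
    rw [hv]
    simpa using sum_norm_sq_mulVec_le M (star v)

lemma l2_opNorm_transpose_le [DecidableEq m] [DecidableEq n] (M : Matrix m n 𝕜) :
    ‖Mᵀ‖ ≤ ‖M‖ := by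
  have h : Mᴴ.map star = Mᵀ := by ext i j; simp
  rw [← l2_opNorm_conjTranspose M, ← h]
  exact l2_opNorm_map_star_le Mᴴ

lemma l2_opNorm_le_one_of_mul_conjTranspose_eq_one [DecidableEq m] [DecidableEq n]
    {M : Matrix m n 𝕜} (hM : M * Mᴴ = 1) : ‖M‖ ≤ 1 := by
  have h := l2_opNorm_conjTranspose_mul_self Mᴴ
  rw [conjTranspose_conjTranspose, hM, l2_opNorm_conjTranspose] at h
  nlinarith [l2_opNorm_one_le (𝕜 := 𝕜) (n := m), norm_nonneg M]

lemma l2_opNorm_kronecker_one_le [DecidableEq l] [DecidableEq n] (X : Matrix m n 𝕜) :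
    ‖X ⊗ₖ (1 : Matrix l l 𝕜)‖ ≤ ‖X‖ :=
  l2_opNorm_le_of_sum_norm_sq_le (norm_nonneg _) fun v => by
    rw [Fintype.sum_prod_type_right, Fintype.sum_prod_type_right, Finset.mul_sum]
    refine Finset.sum_le_sum fun k _ => ?_
    simp only [kronecker_one_mulVec]
    exact sum_norm_sq_mulVec_le X _

lemma l2_opNorm_one_kronecker_le [DecidableEq l] [DecidableEq n] (Y : Matrix m n 𝕜) :
    ‖(1 : Matrix l l 𝕜) ⊗ₖ Y‖ ≤ ‖Y‖ :=
  l2_opNorm_le_of_sum_norm_sq_le (norm_nonneg _) fun v => by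
    rw [Fintype.sum_prod_type, Fintype.sum_prod_type, Finset.mul_sum]
    refine Finset.sum_le_sum fun k _ => ?_
    simp only [one_kronecker_mulVec]
    exact sum_norm_sq_mulVec_le Y _

lemma l2_opNorm_kronecker_le {m' n' : Type*} [Fintype m'] [Fintype n'] [DecidableEq m]
    [DecidableEq n] [DecidableEq m'] [DecidableEq n'] (X : Matrix m n 𝕜) (Y : Matrix m' n' 𝕜) :
    ‖X ⊗ₖ Y‖ ≤ ‖X‖ * ‖Y‖ := by
  have h : X ⊗ₖ Y = X ⊗ₖ (1 : Matrix m' m' 𝕜) * (1 : Matrix n n 𝕜) ⊗ₖ Y := by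
    rw [← mul_kronecker_mul, Matrix.mul_one, Matrix.one_mul]
  rw [h]
  exact (l2_opNorm_mul _ _).trans (mul_le_mul (l2_opNorm_kronecker_one_le X)
    (l2_opNorm_one_kronecker_le Y) (norm_nonneg _) (norm_nonneg _))

lemma l2_opNorm_fromRows_le {m' : Type*} [Fintype m'] [DecidableEq n]
    (X : Matrix m n 𝕜) (Y : Matrix m' n 𝕜) :
    ‖fromRows X Y‖ ≤ √(‖X‖ ^ 2 + ‖Y‖ ^ 2) :=
  l2_opNorm_le_of_sum_norm_sq_le (Real.sqrt_nonneg _) fun v => by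
    rw [Real.sq_sqrt (by positivity), Fintype.sum_sum_type, add_mul]
    simp only [fromRows_mulVec, Sum.elim_inl, Sum.elim_inr]
    exact add_le_add (sum_norm_sq_mulVec_le X v) (sum_norm_sq_mulVec_le Y v)

lemma l2_opNorm_fromCols_le {n' : Type*} [Fintype n'] [DecidableEq m] [DecidableEq n]
    [DecidableEq n'] (X : Matrix m n 𝕜) (Y : Matrix m n' 𝕜) :
    ‖fromCols X Y‖ ≤ √(‖X‖ ^ 2 + ‖Y‖ ^ 2) := by
  rw [← l2_opNorm_conjTranspose, conjTranspose_fromCols_eq_fromRows_conjTranspose,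
    ← l2_opNorm_conjTranspose X, ← l2_opNorm_conjTranspose Y]
  exact l2_opNorm_fromRows_le _ _

lemma l2_opNorm_fromBlocks_zero_one_le [DecidableEq m] [DecidableEq n] :
    ‖(fromBlocks 0 1 0 0 : Matrix (m ⊕ n) (m ⊕ m) 𝕜)‖ ≤ 1 :=
  l2_opNorm_le_of_sum_norm_sq_le zero_le_one fun v => by
    simp only [fromBlocks_mulVec, zero_mulVec, one_mulVec, zero_add, add_zero,
      Fintype.sum_sum_type, Sum.elim_inl, Function.comp_apply, Sum.elim_inr, Pi.zero_apply,
      norm_zero, ne_eq, OfNat.ofNat_ne_zero, not_false_eq_true, zero_pow, Finset.sum_const_zero,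
      one_pow, one_mul, le_add_iff_nonneg_left]
    positivity

lemma l2_opNorm_le_specNorm [DecidableEq m] [DecidableEq n] (A : Matrix m n 𝕜) :
    ‖A‖ ≤ specNorm A := by
  set hH := isHermitian_mul_conjTranspose_self A
  have hsq : ‖A‖ ^ 2 = ‖A * Aᴴ‖ := by
    rw [← l2_opNorm_conjTranspose A, sq, ← l2_opNorm_conjTranspose_mul_self,
      conjTranspose_conjTranspose]
  have hdiag : ‖A * Aᴴ‖ = ‖diagonal (RCLike.ofReal ∘ hH.eigenvalues : m → 𝕜)‖ := by
    conv_lhs => rw [hH.spectral_theorem, Unitary.conjStarAlgAut_apply]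
    rw [← Unitary.coe_star, CStarRing.norm_mul_coe_unitary, CStarRing.norm_coe_unitary_mul]
  have hnonneg : ∀ i, 0 ≤ hH.eigenvalues i := eigenvalues_self_mul_conjTranspose_nonneg A
  refine Real.le_sqrt_of_sq_le ?_
  rw [hsq, hdiag, l2_opNorm_diagonal]
  refine (pi_norm_le_iff_of_nonneg (Real.iSup_nonneg hnonneg)).mpr fun i => ?_
  rw [Function.comp_apply, RCLike.norm_ofReal, abs_of_nonneg (hnonneg i)]
  exact le_ciSup (Set.finite_range _).bddAbove i

lemma le_sigmaMin_of_mul_eq_one [DecidableEq m] [DecidableEq n] [Nonempty m]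
    {M : Matrix m n 𝕜} {W : Matrix n m 𝕜} (hMW : M * W = 1) {C : ℝ} (hC : 0 < C)
    (hW : ‖W‖ ≤ C) : 1 / C ≤ sigmaMin M := by
  set hH := isHermitian_mul_conjTranspose_self M
  refine Real.le_sqrt_of_sq_le (le_ciInf fun i => ?_)
  set v : m → 𝕜 := ⇑(hH.eigenvectorBasis i)
  have hv : ∑ j, ‖v j‖ ^ 2 = 1 := by
    rw [← EuclideanSpace.norm_sq_eq, hH.eigenvectorBasis.orthonormal.1 i, one_pow]
  have heig : hH.eigenvalues i = ∑ j, ‖(Mᴴ *ᵥ v) j‖ ^ 2 := by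
    have hstar : star v ᵥ* M = star (Mᴴ *ᵥ v) := by
      rw [star_mulVec, conjTranspose_conjTranspose]
    rw [hH.eigenvalues_eq, ← mulVec_mulVec, dotProduct_mulVec, hstar, re_star_dotProduct_self]
  have hinv : Wᴴ *ᵥ (Mᴴ *ᵥ v) = v := by
    rw [mulVec_mulVec, ← conjTranspose_mul, hMW, conjTranspose_one, one_mulVec]
  have hbound := sum_norm_sq_mulVec_le Wᴴ (Mᴴ *ᵥ v)
  rw [hinv, hv, l2_opNorm_conjTranspose, ← heig] at hbound
  have hW2 : ‖W‖ ^ 2 ≤ C ^ 2 := pow_le_pow_left₀ (norm_nonneg _) hW 2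
  rw [div_pow, one_pow, div_le_iff₀ (by positivity)]
  nlinarith [eigenvalues_self_mul_conjTranspose_nonneg M i]

end L2OpNorm

section InverseBounds

variable {𝕜 : Type*} [RCLike 𝕜]

lemma l2_opNorm_Ek_le_one (k : ℕ) : ‖Ek 𝕜 k‖ ≤ 1 :=
  l2_opNorm_le_one_of_mul_conjTranspose_eq_one (Ek_mul_conjTranspose_Ek k)

lemma l2_opNorm_Fk_le_one (k : ℕ) : ‖Fk 𝕜 k‖ ≤ 1 :=
  l2_opNorm_le_one_of_mul_conjTranspose_eq_one (Fk_mul_conjTranspose_Fk k)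

lemma l2_opNorm_blockRightInverse_le {m n : Type*} [Fintype m] [Fintype n] [DecidableEq m]
    [DecidableEq n] (P : Matrix m m 𝕜) (S : Matrix m n 𝕜) (H : Matrix n m 𝕜) :
    ‖blockRightInverse P S H‖ ≤ 1 + √(‖S‖ ^ 2 + 1) * ‖H‖ * √(1 + ‖P‖ ^ 2) := by
  have hU : ‖fromRows (-S) (1 : Matrix n n 𝕜)‖ ≤ √(‖S‖ ^ 2 + 1) :=
    (l2_opNorm_fromRows_le _ _).trans <| Real.sqrt_le_sqrt <| by
      rw [norm_neg]; gcongr; simpa using l2_opNorm_one_le (𝕜 := 𝕜) (n := n)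
  have hV : ‖fromCols (1 : Matrix m m 𝕜) (-P)‖ ≤ √(1 + ‖P‖ ^ 2) :=
    (l2_opNorm_fromCols_le _ _).trans <| Real.sqrt_le_sqrt <| by
      rw [norm_neg]; gcongr; simpa using l2_opNorm_one_le (𝕜 := 𝕜) (n := m)
  rw [blockRightInverse]
  refine (norm_add_le _ _).trans (add_le_add l2_opNorm_fromBlocks_zero_one_le ?_)
  refine (l2_opNorm_mul _ _).trans ?_
  refine mul_le_mul ((l2_opNorm_mul _ _).trans ?_) hV (norm_nonneg _) (by positivity)
  exact mul_le_mul_of_nonneg_right hU (norm_nonneg _)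

variable {ι ν : Type*} [Fintype ι] [Fintype ν] [DecidableEq ι] [DecidableEq ν]

lemma l2_opNorm_shiftRightInverse_le (k : ℕ) (B : Matrix ι ι 𝕜) :
    ‖(shiftRightInverse k B : Matrix (ι × (Fin (k + 1) × ν)) (ι × (Fin k × ν)) 𝕜)‖
      ≤ ∑ d ∈ Finset.range k, ‖B‖ ^ d := by
  have hE : ‖(Ek 𝕜 k)ᴴ‖ ≤ 1 := by rw [l2_opNorm_conjTranspose]; exact l2_opNorm_Ek_le_one k
  have hL : ‖(1 : Matrix ι ι 𝕜) ⊗ₖ ((Ek 𝕜 k)ᴴ ⊗ₖ (1 : Matrix ν ν 𝕜))‖ ≤ 1 :=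
    (l2_opNorm_one_kronecker_le _).trans ((l2_opNorm_kronecker_one_le _).trans hE)
  have hT : ‖B ⊗ₖ ((Fk 𝕜 k * (Ek 𝕜 k)ᴴ) ⊗ₖ (1 : Matrix ν ν 𝕜))‖ ≤ ‖B‖ := by
    refine (l2_opNorm_kronecker_le _ _).trans (mul_le_of_le_one_right (norm_nonneg _) ?_)
    refine (l2_opNorm_kronecker_one_le _).trans ((l2_opNorm_mul _ _).trans ?_)
    nlinarith [norm_nonneg (Fk 𝕜 k), norm_nonneg (Ek 𝕜 k)ᴴ, l2_opNorm_Fk_le_one (𝕜 := 𝕜) k]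
  rw [shiftRightInverse]
  refine (l2_opNorm_mul _ _).trans ?_
  refine (mul_le_of_le_one_left (norm_nonneg _) hL).trans ?_
  refine (norm_sum_le _ _).trans (Finset.sum_le_sum fun d _ => ?_)
  exact (l2_opNorm_pow_le _ d).trans (pow_le_pow_left₀ (norm_nonneg _) hT d)

end InverseBounds

end Matrix

lemma max_one_mul_pow_le {s : ℝ} (hs : 0 ≤ s) {d k : ℕ} (hd : d < k) :
    max 1 s * s ^ d ≤ max 1 (s ^ k) := by
  rcases le_total s 1 with h | h
  · rw [max_eq_left h, one_mul]
    exact (pow_le_one₀ hs h).trans (le_max_left _ _)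
  · rw [max_eq_right h, ← pow_succ']
    exact (pow_le_pow_right₀ h hd).trans (le_max_right _ _)

lemma sqrt_two_mul_geom_sum_mul_sqrt_le {s : ℝ} (hs : 0 ≤ s) (k : ℕ) :
    √2 * (∑ d ∈ Finset.range k, s ^ d) * √(1 + s ^ 2) ≤ 2 * k * max 1 (s ^ k) := by
  have hroot : √2 * √(1 + s ^ 2) ≤ 2 * max 1 s := by
    rw [← Real.sqrt_mul zero_le_two]
    refine Real.sqrt_le_iff.mpr ⟨by positivity, ?_⟩
    nlinarith [le_max_left 1 s, le_max_right 1 s]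
  calc √2 * (∑ d ∈ Finset.range k, s ^ d) * √(1 + s ^ 2)
      = (√2 * √(1 + s ^ 2)) * ∑ d ∈ Finset.range k, s ^ d := by ring
    _ ≤ 2 * max 1 s * ∑ d ∈ Finset.range k, s ^ d := by gcongr
    _ = 2 * ∑ d ∈ Finset.range k, max 1 s * s ^ d := by rw [Finset.mul_sum, Finset.mul_sum]; ring_nf
    _ ≤ 2 * ∑ _d ∈ Finset.range k, max 1 (s ^ k) := by
        gcongr with d hd
        exact max_one_mul_pow_le hs (Finset.mem_range.mp hd)
    _ = 2 * k * max 1 (s ^ k) := by simp [mul_assoc]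

theorem statement0 {𝕜 : Type*} [RCLike 𝕜] (ℓ ε n : ℕ) (hℓ : 0 < ℓ) (hε : 0 < ε) (hn : 0 < n)
    (A : Matrix (Fin ℓ) (Fin ℓ) 𝕜) :
    1 / (1 + 2 * (ε : ℝ) * max 1 (specNorm A ^ ε)) ≤
      sigmaMin (Matrix.fromBlocks
        (Aᵀ ⊗ₖ (1 : Matrix (Fin ε × Fin n) (Fin ε × Fin n) 𝕜))
        ((1 : Matrix (Fin ℓ) (Fin ℓ) 𝕜) ⊗ₖ (Ek 𝕜 ε ⊗ₖ (1 : Matrix (Fin n) (Fin n) 𝕜)))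
        ((1 : Matrix (Fin ℓ) (Fin ℓ) 𝕜) ⊗ₖ (1 : Matrix (Fin ε × Fin n) (Fin ε × Fin n) 𝕜))
        ((1 : Matrix (Fin ℓ) (Fin ℓ) 𝕜) ⊗ₖ (Fk 𝕜 ε ⊗ₖ (1 : Matrix (Fin n) (Fin n) 𝕜)))) := by
  have : Nonempty (Fin ℓ × (Fin ε × Fin n)) := ⟨(⟨0, hℓ⟩, ⟨0, hε⟩, ⟨0, hn⟩)⟩
  set s := specNorm A
  have hA : ‖Aᵀ‖ ≤ s := (l2_opNorm_transpose_le A).trans (l2_opNorm_le_specNorm A)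
  have hs : 0 ≤ s := (norm_nonneg _).trans hA
  have hS : ‖(1 : Matrix (Fin ℓ) (Fin ℓ) 𝕜) ⊗ₖ (Fk 𝕜 ε ⊗ₖ (1 : Matrix (Fin n) (Fin n) 𝕜))‖ ≤ 1 :=
    (l2_opNorm_one_kronecker_le _).trans
      ((l2_opNorm_kronecker_one_le _).trans (l2_opNorm_Fk_le_one ε))
  have hP : ‖Aᵀ ⊗ₖ (1 : Matrix (Fin ε × Fin n) (Fin ε × Fin n) 𝕜)‖ ≤ s :=
    (l2_opNorm_kronecker_one_le _).trans hA
  have hH : ‖(shiftRightInverse ε Aᵀ : Matrix (Fin ℓ × (Fin (ε + 1) × Fin n)) _ 𝕜)‖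
      ≤ ∑ d ∈ Finset.range ε, s ^ d :=
    (l2_opNorm_shiftRightInverse_le ε Aᵀ).trans
      (Finset.sum_le_sum fun d _ => pow_le_pow_left₀ (norm_nonneg _) hA d)
  rw [one_kronecker_one]
  refine le_sigmaMin_of_mul_eq_one (fromBlocks_mul_blockRightInverse
    (mul_shiftRightInverse ε Aᵀ)) (by positivity) ?_
  calc _ ≤ 1 + √(1 ^ 2 + 1) * (∑ d ∈ Finset.range ε, s ^ d) * √(1 + s ^ 2) :=
        (l2_opNorm_blockRightInverse_le _ _ _).trans (by gcongr)
    _ ≤ 1 + 2 * ε * max 1 (s ^ ε) := by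
        have := sqrt_two_mul_geom_sum_mul_sqrt_le hs ε
        norm_num at this ⊢
        linarith
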